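/- Let ⟨x,y⟩₁ = −x₀y₀ + x₁y₁ + x₂y₂ + x₃y₃ + x₄y₄ denote the Lorentzian bilinear form on ℝ⁵, let a be a nonzero real number, let A : ℝ → ℝ be differentiable, and for s ≠ 0 define x(s,t,u) = (a A(s)²/s + a s(t² + u²) + s/(4a) + a/s, s t, s u, A(s), a A(s)²/s + a s(t² + u²) − s/(4a) + a/s). Then for all (s,t,u) with s ≠ 0: ⟨x, x⟩₁ = −1 (so x takes values in H⁴ = {x ∈ ℝ⁵ : ⟨x,x⟩₁ = −1}), and ⟨∂ₛx, ∂ₛx⟩₁ = ((A(s) − s A'(s))² + 1)/s², ⟨∂ₜx, ∂ₜx⟩₁ = s², ⟨∂ᵤx, ∂ᵤx⟩₁ = s², with ⟨∂ₛx, ∂ₜx⟩₁ = ⟨∂ₛx, ∂ᵤx⟩₁ = ⟨∂ₜx, ∂ᵤx⟩₁ = 0. -/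

import Mathlib

/-!
In light-cone coordinates `x = (P + q, s t, s u, A, P - q)` with `q = s / (4a)` the form reads
`⟨x, x⟩₁ = -4 P q + s² (t² + u²) + A²`, and `P = a (A² + s² (t² + u²) + 1) / s` is exactly what
makes this `-1`. The partial derivatives are explicit, and the metric coefficients come from the
same computation applied to them.
-/

def lor5 (x y : Fin 5 → ℝ) : ℝ :=
  -(x 0 * y 0) + x 1 * y 1 + x 2 * y 2 + x 3 * y 3 + x 4 * y 4

noncomputable def paraboloidChart (a : ℝ) (A : ℝ → ℝ) (s t u : ℝ) : Fin 5 → ℝ :=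
  ![a * A s ^ 2 / s + a * s * (t ^ 2 + u ^ 2) + s / (4 * a) + a / s,
    s * t, s * u, A s,
    a * A s ^ 2 / s + a * s * (t ^ 2 + u ^ 2) - s / (4 * a) + a / s]

section Chart

variable (a : ℝ) (A : ℝ → ℝ)

theorem lor5_paraboloidChart_self (ha : a ≠ 0) {s : ℝ} (hs : s ≠ 0) (t u : ℝ) :
    lor5 (paraboloidChart a A s t u) (paraboloidChart a A s t u) = -1 := by
  simp only [lor5, paraboloidChart, Matrix.cons_val]
  field_simp
  ring

theorem hasDerivAt_paraboloidChart_fst {A' s : ℝ} (t u : ℝ) (hA : HasDerivAt A A' s)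
    (hs : s ≠ 0) :
    HasDerivAt (fun s' => paraboloidChart a A s' t u)
      ![a * ((2 * s * A s * A' - A s ^ 2 - 1) / s ^ 2 + t ^ 2 + u ^ 2) + 1 / (4 * a), t, u, A',
        a * ((2 * s * A s * A' - A s ^ 2 - 1) / s ^ 2 + t ^ 2 + u ^ 2) - 1 / (4 * a)] s := by
  have hsq := ((hA.fun_pow 2).const_mul a).fun_div (hasDerivAt_id' s) hs
  have hlin := ((hasDerivAt_id' s).const_mul a).mul_const (t ^ 2 + u ^ 2)
  have hq := (hasDerivAt_id' s).div_const (4 * a)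
  have hinv := (hasDerivAt_const s a).fun_div (hasDerivAt_id' s) hs
  refine hasDerivAt_pi.2 ?_
  simp only [Fin.forall_fin_succ, IsEmpty.forall_iff, paraboloidChart, Matrix.cons_val_zero,
    Matrix.cons_val_succ, and_true]
  refine ⟨?_, ?_, ?_, hA, ?_⟩
  · exact (((hsq.add hlin).add hq).add hinv).congr_deriv (by push_cast; ring)
  · simpa using (hasDerivAt_id' s).mul_const t
  · simpa using (hasDerivAt_id' s).mul_const u
  · exact (((hsq.add hlin).sub hq).add hinv).congr_deriv (by push_cast; ring)

theorem hasDerivAt_paraboloidChart_snd (s t u : ℝ) :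
    HasDerivAt (fun t' => paraboloidChart a A s t' u)
      ![2 * a * s * t, s, 0, 0, 2 * a * s * t] t := by
  have hP := (((hasDerivAt_pow 2 t).add_const (u ^ 2)).const_mul (a * s)).const_add (a * A s ^ 2 / s)
  refine hasDerivAt_pi.2 ?_
  simp only [Fin.forall_fin_succ, IsEmpty.forall_iff, paraboloidChart, Matrix.cons_val_zero,
    Matrix.cons_val_succ, and_true]
  refine ⟨?_, ?_, hasDerivAt_const t _, hasDerivAt_const t _, ?_⟩
  · exact ((hP.add_const _).add_const _).congr_deriv (by push_cast; ring)
  · simpa using (hasDerivAt_id' t).const_mul s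
  · exact ((hP.sub_const _).add_const _).congr_deriv (by push_cast; ring)

theorem hasDerivAt_paraboloidChart_thd (s t u : ℝ) :
    HasDerivAt (fun u' => paraboloidChart a A s t u')
      ![2 * a * s * u, 0, s, 0, 2 * a * s * u] u := by
  have hP := (((hasDerivAt_pow 2 u).const_add (t ^ 2)).const_mul (a * s)).const_add (a * A s ^ 2 / s)
  refine hasDerivAt_pi.2 ?_
  simp only [Fin.forall_fin_succ, IsEmpty.forall_iff, paraboloidChart, Matrix.cons_val_zero,
    Matrix.cons_val_succ, and_true]
  refine ⟨?_, hasDerivAt_const u _, ?_, hasDerivAt_const u _, ?_⟩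
  · exact ((hP.add_const _).add_const _).congr_deriv (by push_cast; ring)
  · simpa using (hasDerivAt_id' u).const_mul s
  · exact ((hP.sub_const _).add_const _).congr_deriv (by push_cast; ring)

end Chart

/-- Case (4) of Theorem 4.8: the hypersurface (4.10) of `H⁴ ⊂ ℝ⁵₁` lies in `H⁴`
and has induced metric `(((A − sA')² + 1)/s²)ds² + s²dt² + s²du²`. -/
theorem stmt_16 (a : ℝ) (ha : a ≠ 0) (A : ℝ → ℝ) (hA : Differentiable ℝ A)
    (x : ℝ → ℝ → ℝ → Fin 5 → ℝ)
    (hx : ∀ s t u : ℝ, s ≠ 0 → x s t u =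
      ![a * A s ^ 2 / s + a * s * (t ^ 2 + u ^ 2) + s / (4 * a) + a / s,
        s * t, s * u, A s,
        a * A s ^ 2 / s + a * s * (t ^ 2 + u ^ 2) - s / (4 * a) + a / s]) :
    ∀ s t u : ℝ, s ≠ 0 →
      lor5 (x s t u) (x s t u) = -1 ∧
      lor5 (deriv (fun s' => x s' t u) s) (deriv (fun s' => x s' t u) s)
        = ((A s - s * deriv A s) ^ 2 + 1) / s ^ 2 ∧
      lor5 (deriv (fun t' => x s t' u) t) (deriv (fun t' => x s t' u) t) = s ^ 2 ∧
      lor5 (deriv (fun u' => x s t u') u) (deriv (fun u' => x s t u') u) = s ^ 2 ∧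
      lor5 (deriv (fun s' => x s' t u) s) (deriv (fun t' => x s t' u) t) = 0 ∧
      lor5 (deriv (fun s' => x s' t u) s) (deriv (fun u' => x s t u') u) = 0 ∧
      lor5 (deriv (fun t' => x s t' u) t) (deriv (fun u' => x s t u') u) = 0 := by
  intro s t u hs
  have hchart : ∀ s t u, s ≠ 0 → x s t u = paraboloidChart a A s t u := hx
  have hxs := ((hasDerivAt_paraboloidChart_fst a A t u (hA s).hasDerivAt hs).congr_of_eventuallyEq
    (by filter_upwards [eventually_ne_nhds hs] with s' hs' using hchart s' t u hs')).deriv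
  have hxt := ((hasDerivAt_paraboloidChart_snd a A s t u).congr_of_eventuallyEq
    (.of_forall fun t' => hchart s t' u hs)).deriv
  have hxu := ((hasDerivAt_paraboloidChart_thd a A s t u).congr_of_eventuallyEq
    (.of_forall fun u' => hchart s t u' hs)).deriv
  rw [hchart s t u hs, hxs, hxt, hxu]
  refine ⟨lor5_paraboloidChart_self a A ha hs t u, ?_⟩
  simp only [lor5, Matrix.cons_val]
  refine ⟨?_, ?_, ?_, ?_, ?_, ?_⟩ <;> field_simp <;> ring
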